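/- Let d ≥ 2 be even and let m > 0 be a real number such that m^d − c_{d−1}(m)·m < 0. Define u ∈ ℝ^{d+1} by u_k = c_{d−k}(m) · m^k + (−1)^{d+k−1} · c_{k−1}(m) · m^{d+1−k} for k = 0, …, d, where c_{−1}(m) = 0, and let a^{(i)} = e_{i+1} − e_{i−1} (indices modulo d+1). Then ⟨u, e_d⟩ < 0, and for every i ∈ {1, …, d} one has ⟨u, e_d + m·a^{(i)}⟩ ≤ 0, with equality if and only if i = d. -/

import Mathlib

/-- Shifted continuant numbers: `cseq m n = c_{n-1}(m)`, where `c_{-1} = 0`, `c_0 = 1`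
and `c_k = c_{k-1} + m^2 c_{k-2}` for `k ≥ 1`. -/
noncomputable def cseq (m : ℝ) : ℕ → ℝ
  | 0 => 0
  | 1 => 1
  | (n+2) => cseq m (n+1) + m ^ 2 * cseq m n

/-- `u_k = c_{d-k}(m)·m^k + (-1)^{d+k-1}·c_{k-1}(m)·m^{d+1-k}`, with `c_{-1} = 0`. -/
noncomputable def uval (d : ℕ) (m : ℝ) (k : ℕ) : ℝ :=
  cseq m (d - k + 1) * m ^ k + (-1 : ℝ) ^ (d + k - 1) * cseq m k * m ^ (d + 1 - k)

/-- The standard basis vector `e_i` of `ℝ^{d+1}`. -/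
def eb (d : ℕ) (i : Fin (d+1)) : Fin (d+1) → ℝ := fun j => if j = i then 1 else 0

/-- The vector `a^{(i)} = e_{i+1} - e_{i-1}` (indices modulo `d+1`). -/
def av (d : ℕ) (i : Fin (d+1)) : Fin (d+1) → ℝ := eb d (i + 1) - eb d (i - 1)


/-!
The continuant recurrence makes `u` satisfy `u_i + m (u_{i+1} - u_{i-1}) = 0` for every
`i ≠ 0`, read cyclically, so `⟨u, e_d + m a^{(i)}⟩ = u_d - u_i`, while `⟨u, e_d⟩ = u_d = m^d - c_{d-1} m < 0`.
It remains to see `u_d < u_i` for `0 < i < d`. For odd `i` the two terms of `u_i` are positive.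
For even `i` the addition formula `c_{a+b} = c_a c_b + m^2 c_{a-1} c_{b-1}` gives
`u_i - u_d = (c_{d-i} - m^{d-i}) (m^i + m c_{i-1}) + m^3 c_{d-i-1} c_{i-2}`, which is positive
because `c_{2k} ≥ m^{2k}`.
-/

lemma cseq_add_two (m : ℝ) (n : ℕ) : cseq m (n + 2) = cseq m (n + 1) + m ^ 2 * cseq m n := rfl

lemma cseq_nonneg (m : ℝ) : ∀ n, 0 ≤ cseq m n
  | 0 => le_rfl
  | 1 => zero_le_one
  | n + 2 => by
    rw [cseq_add_two]
    have := cseq_nonneg m (n + 1)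
    have := cseq_nonneg m n
    positivity

lemma cseq_pos (m : ℝ) {n : ℕ} (hn : n ≠ 0) : 0 < cseq m n := by
  obtain ⟨n, rfl⟩ := Nat.exists_eq_succ_of_ne_zero hn
  induction n with
  | zero => exact zero_lt_one
  | succ n ih =>
    rw [cseq_add_two]
    have := ih n.succ_ne_zero
    have := cseq_nonneg m n
    positivity

lemma cseq_add (m : ℝ) :
    ∀ a b, cseq m (a + b + 1) = cseq m (a + 1) * cseq m (b + 1) + m ^ 2 * cseq m a * cseq m b
  | 0, b => by simp [cseq]
  | 1, b => by
    rw [show 1 + b + 1 = b + 2 by omega, cseq_add_two]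
    norm_num [cseq]
  | a + 2, b => by
    rw [show a + 2 + b + 1 = (a + b + 1) + 2 by omega, cseq_add_two,
      show a + b + 1 + 1 = (a + 1) + b + 1 by omega, cseq_add m (a + 1) b, cseq_add m a b,
      cseq_add_two m (a + 1), cseq_add_two m a]
    ring

lemma pow_le_cseq_of_even (m : ℝ) {r : ℕ} (hr : Even r) : m ^ r ≤ cseq m (r + 1) := by
  obtain ⟨k, rfl⟩ := hr
  induction k with
  | zero => simp [cseq]
  | succ k ih =>
    rw [show k + 1 + (k + 1) + 1 = (k + k + 1) + 2 by omega, cseq_add_two,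
      show k + 1 + (k + 1) = 2 + (k + k) by omega, pow_add]
    have := cseq_nonneg m (k + k + 1 + 1)
    nlinarith [sq_nonneg m]

-- Splitting `d = k + r` removes the truncated subtractions from `uval`.
lemma uval_add (m : ℝ) (k r : ℕ) :
    uval (k + r) m k = cseq m (r + 1) * m ^ k - (-1) ^ r * cseq m k * m ^ (r + 1) := by
  rcases k with _ | k
  · simp [uval, cseq]
  · rw [uval, show k + 1 + r - (k + 1) + 1 = r + 1 by omega,
      show k + 1 + r + 1 - (k + 1) = r + 1 by omega,
      show k + 1 + r + (k + 1) - 1 = 2 * k + r + 1 by omega]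
    have hsign : (-1 : ℝ) ^ (2 * k + r + 1) = -(-1) ^ r := by
      rw [pow_succ, pow_add, pow_mul]
      norm_num
    rw [hsign]
    ring

lemma uval_self (d : ℕ) (m : ℝ) : uval d m d = m ^ d - cseq m d * m := by
  simpa [cseq] using uval_add m d 0

lemma uval_recurrence (m : ℝ) {d k : ℕ} (hk : k ≠ 0) (hkd : k < d) :
    uval d m k + m * (uval d m (k + 1) - uval d m (k - 1)) = 0 := by
  obtain ⟨j, rfl⟩ : ∃ j, k = j + 1 := ⟨k - 1, by omega⟩
  obtain ⟨r, rfl⟩ : ∃ r, d = j + 2 + r := ⟨d - j - 2, by omega⟩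
  rw [show j + 2 + r = (j + 1) + (r + 1) by omega, uval_add,
    show (j + 1) + (r + 1) = (j + 2) + r by omega, uval_add,
    show (j + 2) + r = j + (r + 2) by omega, Nat.add_sub_cancel, uval_add,
    cseq_add_two m (r + 1), cseq_add_two m j]
  ring

lemma uval_recurrence_last (m : ℝ) {d : ℕ} (hd : d ≠ 0) :
    uval d m d + m * (uval d m 0 - uval d m (d - 1)) = 0 := by
  obtain ⟨e, rfl⟩ := Nat.exists_eq_succ_of_ne_zero hd
  have h0 := uval_add m 0 (e + 1)
  have h1 := uval_add m e 1
  rw [zero_add] at h0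
  rw [uval_self, h0, Nat.succ_sub_one, h1, cseq_add_two]
  simp [cseq]
  ring

lemma uval_recurrence_fin (m : ℝ) {d : ℕ} (i : Fin (d + 1)) (hi : i ≠ 0) :
    uval d m i + m * (uval d m ↑(i + 1) - uval d m ↑(i - 1)) = 0 := by
  have hi' : (i : ℕ) ≠ 0 := Fin.val_ne_zero_iff.mpr hi
  rw [Fin.coe_sub_one, if_neg hi]
  rcases eq_or_ne i (Fin.last d) with rfl | hl
  · rw [Fin.last_add_one, Fin.val_zero, Fin.val_last]
    exact uval_recurrence_last m hi'
  · rw [Fin.val_add_one_of_lt (Fin.lt_last_iff_ne_last.mpr hl)]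
    exact uval_recurrence m hi' (Fin.val_lt_last hl)

lemma uval_pos_of_odd {m : ℝ} (hm : 0 < m) {i r : ℕ} (hi : i ≠ 0) (hr : Odd r) :
    0 < uval (i + r) m i := by
  rw [uval_add, hr.neg_one_pow]
  have := cseq_pos m r.succ_ne_zero
  have := cseq_pos m hi
  have := pow_pos hm i
  have := pow_pos hm (r + 1)
  nlinarith

lemma uval_self_lt_of_even {m : ℝ} (hm : 0 < m) {i r : ℕ} (hi : 2 ≤ i) (hr : Even r)
    (hr0 : r ≠ 0) : uval (i + r) m (i + r) < uval (i + r) m i := by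
  obtain ⟨j, rfl⟩ : ∃ j, i = j + 1 := ⟨i - 1, by omega⟩
  have hadd := cseq_add m r j
  rw [show r + j + 1 = j + 1 + r by omega] at hadd
  have key : uval (j + 1 + r) m (j + 1) - uval (j + 1 + r) m (j + 1 + r)
      = (cseq m (r + 1) - m ^ r) * (m ^ (j + 1) + m * cseq m (j + 1))
        + m ^ 3 * cseq m r * cseq m j := by
    rw [uval_add, uval_self, hadd, hr.neg_one_pow]
    ring
  have := cseq_pos m hr0
  have := cseq_pos m (by omega : j ≠ 0)
  have := cseq_pos m j.succ_ne_zero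
  have : 0 ≤ (cseq m (r + 1) - m ^ r) * (m ^ (j + 1) + m * cseq m (j + 1)) :=
    mul_nonneg (sub_nonneg.mpr (pow_le_cseq_of_even m hr)) (by positivity)
  have : 0 < m ^ 3 * cseq m r * cseq m j := by positivity
  linarith

lemma uval_self_lt_uval {m : ℝ} (hm : 0 < m) {d : ℕ} (hd : Even d) (hneg : uval d m d < 0)
    {i : ℕ} (hi : i ≠ 0) (hid : i < d) : uval d m d < uval d m i := by
  obtain ⟨r, rfl⟩ := Nat.exists_eq_add_of_le hid.le
  rcases Nat.even_or_odd r with hr | hr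
  · have hi2 : 2 ≤ i := by
      obtain ⟨a, ha⟩ := (Nat.even_add.mp hd).mpr hr
      omega
    exact uval_self_lt_of_even hm hi2 hr (by omega)
  · exact hneg.trans (uval_pos_of_odd hm hi hr)

lemma sum_mul_eb {d : ℕ} (f : Fin (d + 1) → ℝ) (t : Fin (d + 1)) :
    ∑ j, f j * eb d t j = f t := by
  simp [eb]

lemma sum_mul_eb_add_mul_av {d : ℕ} (f : Fin (d + 1) → ℝ) (m : ℝ) (t i : Fin (d + 1)) :
    ∑ j, f j * (eb d t j + m * av d i j) = f t + m * (f (i + 1) - f (i - 1)) := by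
  simp only [av, Pi.sub_apply, mul_add, mul_sub, mul_left_comm (f _) m, Finset.sum_add_distrib,
    Finset.sum_sub_distrib, ← Finset.mul_sum, sum_mul_eb]

theorem stmt15_general (d : ℕ) (hde : Even d) (m : ℝ) (hm : 0 < m)
    (hneg : m ^ d - cseq m d * m < 0) :
    (∑ j : Fin (d+1), uval d m (j : ℕ) * eb d (Fin.last d) j) < 0 ∧
    ∀ i : Fin (d+1), i ≠ 0 →
      (∑ j : Fin (d+1), uval d m (j : ℕ) * (eb d (Fin.last d) j + m * av d i j)) ≤ 0 ∧
      ((∑ j : Fin (d+1), uval d m (j : ℕ) * (eb d (Fin.last d) j + m * av d i j)) = 0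
        ↔ i = Fin.last d) := by
  have hlast : uval d m d < 0 := by rwa [uval_self]
  refine ⟨by rwa [sum_mul_eb, Fin.val_last], fun i hi => ?_⟩
  have hsum : ∑ j : Fin (d+1), uval d m (j : ℕ) * (eb d (Fin.last d) j + m * av d i j)
      = uval d m d - uval d m i := by
    rw [sum_mul_eb_add_mul_av, Fin.val_last]
    linarith [uval_recurrence_fin m i hi]
  rw [hsum, sub_nonpos, sub_eq_zero]
  rcases eq_or_ne i (Fin.last d) with rfl | hl
  · simp
  · have hlt := uval_self_lt_uval hm hde hlast (Fin.val_ne_zero_iff.mpr hi) (Fin.val_lt_last hl)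
    exact ⟨hlt.le, iff_of_false hlt.ne hl⟩

theorem stmt15 (d : ℕ) (hd : 2 ≤ d) (hde : Even d) (m : ℝ) (hm : 0 < m)
    (hneg : m ^ d - cseq m d * m < 0) :
    (∑ j : Fin (d+1), uval d m (j : ℕ) * eb d (Fin.last d) j) < 0 ∧
    ∀ i : Fin (d+1), i ≠ 0 →
      (∑ j : Fin (d+1), uval d m (j : ℕ) * (eb d (Fin.last d) j + m * av d i j)) ≤ 0 ∧
      ((∑ j : Fin (d+1), uval d m (j : ℕ) * (eb d (Fin.last d) j + m * av d i j)) = 0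
        ↔ i = Fin.last d) :=
  stmt15_general d hde m hm hneg
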